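/- Let V : P → B(K) be a strictly continuous isometric representation of a closed spanning pointed convex cone P with interior Ω, and let h : Ω → K be a continuous map satisfying V_a* h_a = 0 and h_{a+b} = h_a + V_a h_b for all a, b ∈ Ω. Then there exists μ ∈ ℝ^d such that ‖h_a‖² = ⟨μ, a⟩ for every a ∈ Ω. -/

import Mathlib

/-!
Orthogonality of `h_a ∈ ker V_a*` and `V_a h_b`, together with `‖V_a h_b‖ = ‖h_b‖`, makes
`f a = ‖h_a‖²` additive on the open convex cone `Ω`. Since `Ω - Ω` is the whole space, `f` extends
(by `f (a - b) := f a - f b`) to an additive map, which is continuous because it is so on the open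
set `Ω`; a continuous additive map on `ℝ^d` is linear, hence of the form `⟨μ, ·⟩` by Riesz.
-/

open ContinuousLinearMap Set

section Cone

variable {E : Type*} [AddCommGroup E] {P : Set E}

theorem add_mem_of_convex_of_smul_mem [Module ℝ E] (hconv : Convex ℝ P)
    (hcone : ∀ c : ℝ, 0 ≤ c → ∀ x ∈ P, c • x ∈ P) {a b : E} (ha : a ∈ P) (hb : b ∈ P) :
    a + b ∈ P := by
  have hmid : (2 : ℝ) • ((1 / 2 : ℝ) • a + (1 / 2 : ℝ) • b) ∈ P :=
    hcone 2 zero_le_two _ (hconv ha hb (by norm_num) (by norm_num) (by norm_num))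
  rwa [smul_add, smul_smul, smul_smul, show (2 : ℝ) * (1 / 2) = 1 by norm_num, one_smul,
    one_smul] at hmid

variable [TopologicalSpace E] [IsTopologicalAddGroup E]

open scoped Pointwise in
theorem add_mem_interior_of_add_mem (hadd : ∀ a ∈ P, ∀ b ∈ P, a + b ∈ P) {a b : E}
    (ha : a ∈ interior P) (hb : b ∈ P) : a + b ∈ interior P := by
  have hsub : interior P + P ⊆ P := by
    rintro _ ⟨x, hx, y, hy, rfl⟩
    exact hadd x (interior_subset hx) y hy
  exact interior_maximal hsub isOpen_interior.add_right (add_mem_add ha hb)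

theorem exists_interior_sub_eq (hadd : ∀ a ∈ P, ∀ b ∈ P, a + b ∈ P)
    (hspan : ∀ x, ∃ a ∈ P, ∃ b ∈ P, x = a - b) {a₀ : E} (ha₀ : a₀ ∈ interior P) (x : E) :
    ∃ a ∈ interior P, ∃ b ∈ interior P, x = a - b := by
  obtain ⟨a, ha, b, hb, rfl⟩ := hspan x
  exact ⟨a₀ + a, add_mem_interior_of_add_mem hadd ha₀ ha, a₀ + b,
    add_mem_interior_of_add_mem hadd ha₀ hb, by abel⟩

end Cone

section Extension

variable {G : Type*} [AddCommGroup G] {M : Set G}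

theorem exists_addMonoidHom_eqOn_of_map_add {R : Type*} [AddCommGroup R]
    (hadd : ∀ a ∈ M, ∀ b ∈ M, a + b ∈ M) (hspan : ∀ x, ∃ a ∈ M, ∃ b ∈ M, x = a - b)
    {f : G → R} (hf : ∀ a ∈ M, ∀ b ∈ M, f (a + b) = f a + f b) :
    ∃ φ : G →+ R, EqOn φ f M := by
  have hwd : ∀ a ∈ M, ∀ b ∈ M, ∀ a' ∈ M, ∀ b' ∈ M, a - b = a' - b' →
      f a - f b = f a' - f b' := by
    intro a ha b hb a' ha' b' hb' hab
    have hsum : f (a + b') = f (a' + b) := by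
      rw [sub_eq_sub_iff_add_eq_add.mp hab]
    rw [hf a ha b' hb', hf a' ha' b hb] at hsum
    exact sub_eq_sub_iff_add_eq_add.mpr hsum
  choose A hA B hB hAB using hspan
  refine ⟨AddMonoidHom.mk' (fun x => f (A x) - f (B x)) fun x y => ?_, fun a ha => ?_⟩
  · have hxy : A (x + y) - B (x + y) = (A x + A y) - (B x + B y) := by
      rw [← hAB, add_sub_add_comm, ← hAB, ← hAB]
    rw [hwd _ (hA _) _ (hB _) _ (hadd _ (hA x) _ (hA y)) _ (hadd _ (hB x) _ (hB y)) hxy,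
      hf _ (hA x) _ (hA y), hf _ (hB x) _ (hB y)]
    abel
  · have ha' : A a - B a = (a + a) - a := by rw [← hAB, add_sub_cancel_right]
    simp only [AddMonoidHom.mk'_apply]
    rw [hwd _ (hA a) _ (hB a) _ (hadd a ha a ha) _ ha ha', hf a ha a ha]
    abel

variable [TopologicalSpace G] [IsTopologicalAddGroup G]

theorem AddMonoidHom.continuous_of_continuousOn_isOpen {H : Type*} [AddCommGroup H]
    [TopologicalSpace H] [IsTopologicalAddGroup H] (φ : G →+ H) (hM : IsOpen M) {b : G}
    (hb : b ∈ M) (hφ : ContinuousOn φ M) : Continuous φ := by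
  refine continuous_of_continuousAt_zero φ ?_
  have hshift : ContinuousAt (fun x => φ (x + b) - φ b) 0 := by
    refine ContinuousAt.sub ?_ continuousAt_const
    refine ContinuousAt.comp (f := fun x => x + b) ?_ (continuous_add_const b).continuousAt
    rw [zero_add]
    exact hφ.continuousAt (hM.mem_nhds hb)
  simpa only [map_add, add_sub_cancel_right] using hshift

end Extension

theorem exists_inner_eq_of_map_add {E : Type*} [NormedAddCommGroup E] [InnerProductSpace ℝ E]
    [CompleteSpace E] {Ω : Set E} (hopen : IsOpen Ω) (hadd : ∀ a ∈ Ω, ∀ b ∈ Ω, a + b ∈ Ω)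
    (hspan : ∀ x, ∃ a ∈ Ω, ∃ b ∈ Ω, x = a - b) {f : E → ℝ} (hcont : ContinuousOn f Ω)
    (hf : ∀ a ∈ Ω, ∀ b ∈ Ω, f (a + b) = f a + f b) :
    ∃ μ : E, ∀ a ∈ Ω, f a = inner ℝ μ a := by
  obtain ⟨φ, hφf⟩ := exists_addMonoidHom_eqOn_of_map_add hadd hspan hf
  obtain ⟨-, -, b, hb, -⟩ := hspan 0
  have hφ : Continuous φ := φ.continuous_of_continuousOn_isOpen hopen hb (hcont.congr hφf)
  refine ⟨(InnerProductSpace.toDual ℝ E).symm (φ.toRealLinearMap hφ), fun a ha => ?_⟩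
  rw [InnerProductSpace.toDual_symm_apply, AddMonoidHom.coe_toRealLinearMap, hφf ha]

theorem norm_add_apply_sq_of_adjoint_apply_eq_zero {𝕜 E F : Type*} [RCLike 𝕜]
    [NormedAddCommGroup E] [NormedAddCommGroup F] [InnerProductSpace 𝕜 E] [InnerProductSpace 𝕜 F]
    [CompleteSpace E] [CompleteSpace F] (T : E →L[𝕜] F) {x : F} (hx : adjoint T x = 0) (y : E) :
    ‖x + T y‖ ^ 2 = ‖x‖ ^ 2 + ‖T y‖ ^ 2 := by
  rw [norm_add_sq (𝕜 := 𝕜), ← adjoint_inner_left, hx, inner_zero_left, map_zero, mul_zero,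
    add_zero]

theorem additive_cocycle_norm_sq_linear_general {d : ℕ}
    {K : Type*} [NormedAddCommGroup K] [InnerProductSpace ℂ K] [CompleteSpace K]
    (P : Set (EuclideanSpace ℝ (Fin d)))
    (hconv : Convex ℝ P)
    (hcone : ∀ (c : ℝ), 0 ≤ c → ∀ x ∈ P, c • x ∈ P)
    (hspan : ∀ x : EuclideanSpace ℝ (Fin d), ∃ a ∈ P, ∃ b ∈ P, x = a - b)
    (V : EuclideanSpace ℝ (Fin d) → K →L[ℂ] K)
    (hiso : ∀ x ∈ P, ∀ ξ : K, ‖V x ξ‖ = ‖ξ‖)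
    (h : EuclideanSpace ℝ (Fin d) → K)
    (hcont : ContinuousOn h (interior P))
    (hker : ∀ a ∈ interior P, ContinuousLinearMap.adjoint (V a) (h a) = 0)
    (hcoc : ∀ a ∈ interior P, ∀ b ∈ interior P, h (a + b) = h a + V a (h b)) :
    ∃ μ : EuclideanSpace ℝ (Fin d), ∀ a ∈ interior P, ‖h a‖ ^ 2 = (inner ℝ μ a : ℝ) := by
  rcases (interior P).eq_empty_or_nonempty with hempty | ⟨a₀, ha₀⟩
  · exact ⟨0, by simp [hempty]⟩
  have hPadd : ∀ a ∈ P, ∀ b ∈ P, a + b ∈ P := fun a ha b hb =>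
    add_mem_of_convex_of_smul_mem hconv hcone ha hb
  refine exists_inner_eq_of_map_add isOpen_interior
    (fun a ha b hb => add_mem_interior_of_add_mem hPadd ha (interior_subset hb))
    (exists_interior_sub_eq hPadd hspan ha₀) (hcont.norm.pow 2) fun a ha b hb => ?_
  rw [hcoc a ha b hb, norm_add_apply_sq_of_adjoint_apply_eq_zero _ (hker a ha),
    hiso a (interior_subset ha)]

/-- The squared norm of an `Ω`-additive cocycle of a strictly continuous isometric
representation is linear: `‖h_a‖² = ⟨μ, a⟩` for some `μ ∈ ℝ^d`. -/
theorem additive_cocycle_norm_sq_linear {d : ℕ}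
    {K : Type*} [NormedAddCommGroup K] [InnerProductSpace ℂ K] [CompleteSpace K]
    (P : Set (EuclideanSpace ℝ (Fin d)))
    (hclosed : IsClosed P) (hconv : Convex ℝ P)
    (hcone : ∀ (c : ℝ), 0 ≤ c → ∀ x ∈ P, c • x ∈ P)
    (hspan : ∀ x : EuclideanSpace ℝ (Fin d), ∃ a ∈ P, ∃ b ∈ P, x = a - b)
    (hpointed : P ∩ (-P) = {0})
    (V : EuclideanSpace ℝ (Fin d) → K →L[ℂ] K)
    (hiso : ∀ x ∈ P, ∀ ξ : K, ‖V x ξ‖ = ‖ξ‖)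
    (hsem : ∀ x ∈ P, ∀ y ∈ P, V (x + y) = V x ∘L V y)
    (hstrong : ∀ ξ : K, ContinuousOn (fun x => V x ξ) P)
    (hadj : ∀ ξ : K, ContinuousOn (fun x => ContinuousLinearMap.adjoint (V x) ξ) P)
    (h : EuclideanSpace ℝ (Fin d) → K)
    (hcont : ContinuousOn h (interior P))
    (hker : ∀ a ∈ interior P, ContinuousLinearMap.adjoint (V a) (h a) = 0)
    (hcoc : ∀ a ∈ interior P, ∀ b ∈ interior P, h (a + b) = h a + V a (h b)) :
    ∃ μ : EuclideanSpace ℝ (Fin d), ∀ a ∈ interior P, ‖h a‖ ^ 2 = (inner ℝ μ a : ℝ) :=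
  additive_cocycle_norm_sq_linear_general P hconv hcone hspan V hiso h hcont hker hcoc
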